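/- Let K ⊂ R^p be a convex cone, E a p×p real matrix, and x̄ ∈ K a unit vector. Let T_K(x̄) = {t(v - x̄) : t ≥ 0, v ∈ K} be the tangent cone of K at x̄ and ‖E‖_{T_K(x̄)} its cone-restricted operator seminorm. For any unit vector v ∈ K, |v^T E v - x̄^T E x̄| ≤ 4 ‖v - x̄‖ ‖E‖_{T_K(x̄)}. -/

import Mathlib

open Matrix

/-- Euclidean norm of a vector in `Fin p → ℝ`. -/
noncomputable def enorm' {p : ℕ} (v : Fin p → ℝ) : ℝ := Real.sqrt (v ⬝ᵥ v)

/-- The cone-restricted operator seminorm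
`‖E‖_C = sup_{x,y ∈ C, ‖x‖=‖y‖=1} |xᵀ E y|`. -/
noncomputable def coneNorm {p : ℕ} (C : Set (Fin p → ℝ)) (E : Matrix (Fin p) (Fin p) ℝ) : ℝ :=
  sSup {r : ℝ | ∃ x ∈ C, ∃ y ∈ C, enorm' x = 1 ∧ enorm' y = 1 ∧ r = |x ⬝ᵥ E.mulVec y|}

/-- The tangent cone of `K` at `x̄`: `T_K(x̄) = {t (v - x̄) : t ≥ 0, v ∈ K}`. -/
def tangentCone {p : ℕ} (K : Set (Fin p → ℝ)) (xbar : Fin p → ℝ) : Set (Fin p → ℝ) :=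
  {w | ∃ t : ℝ, 0 ≤ t ∧ ∃ v ∈ K, w = t • (v - xbar)}

/-!
Because `T_K(x̄)` is a cone, `|xᵀEy| ≤ ‖x‖ ‖y‖ ‖E‖_{T_K(x̄)}` for all `x, y ∈ T_K(x̄)`
(normalize both vectors). Besides `v - x̄`, also `v = (v + x̄) - x̄` and `x̄ = 2x̄ - x̄` lie in
`T_K(x̄)`, so the splitting `vᵀEv - x̄ᵀEx̄ = (v - x̄)ᵀEv + x̄ᵀE(v - x̄)` already gives the
bound with constant 2.
-/

section

variable {p : ℕ}

lemma enorm'_eq_norm (x : Fin p → ℝ) :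
    enorm' x = ‖(WithLp.toLp 2 x : EuclideanSpace ℝ (Fin p))‖ := by
  rw [enorm', EuclideanSpace.norm_eq]
  simp [dotProduct, sq]

lemma enorm'_smul (c : ℝ) (x : Fin p → ℝ) : enorm' (c • x) = |c| * enorm' x := by
  simp only [enorm'_eq_norm, WithLp.toLp_smul, norm_smul, Real.norm_eq_abs]

lemma enorm'_eq_zero {x : Fin p → ℝ} : enorm' x = 0 ↔ x = 0 := by
  simp [enorm'_eq_norm]

lemma enorm'_nonneg (x : Fin p → ℝ) : 0 ≤ enorm' x := Real.sqrt_nonneg _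

lemma dotProduct_mulVec_eq_inner (E : Matrix (Fin p) (Fin p) ℝ) (x y : Fin p → ℝ) :
    x ⬝ᵥ E *ᵥ y = inner ℝ (WithLp.toLp 2 x : EuclideanSpace ℝ (Fin p))
      (Matrix.toEuclideanCLM (𝕜 := ℝ) E (WithLp.toLp 2 y)) := by
  simp [EuclideanSpace.inner_eq_star_dotProduct, dotProduct_comm]

lemma abs_dotProduct_mulVec_le_opNorm (E : Matrix (Fin p) (Fin p) ℝ) (x y : Fin p → ℝ) :
    |x ⬝ᵥ E *ᵥ y| ≤ enorm' x * (‖Matrix.toEuclideanCLM (𝕜 := ℝ) E‖ * enorm' y) := by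
  rw [dotProduct_mulVec_eq_inner, enorm'_eq_norm, enorm'_eq_norm]
  exact (abs_real_inner_le_norm _ _).trans
    (mul_le_mul_of_nonneg_left (ContinuousLinearMap.le_opNorm _ _) (norm_nonneg _))

lemma bddAbove_coneNorm_set (C : Set (Fin p → ℝ)) (E : Matrix (Fin p) (Fin p) ℝ) :
    BddAbove {r : ℝ | ∃ x ∈ C, ∃ y ∈ C, enorm' x = 1 ∧ enorm' y = 1 ∧
      r = |x ⬝ᵥ E *ᵥ y|} := by
  refine ⟨‖Matrix.toEuclideanCLM (𝕜 := ℝ) E‖, ?_⟩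
  rintro r ⟨x, -, y, -, hx, hy, rfl⟩
  simpa [hx, hy] using abs_dotProduct_mulVec_le_opNorm E x y

lemma coneNorm_nonneg (C : Set (Fin p → ℝ)) (E : Matrix (Fin p) (Fin p) ℝ) :
    0 ≤ coneNorm C E :=
  Real.sSup_nonneg fun _ ⟨_, _, _, _, _, _, hr⟩ => hr ▸ abs_nonneg _

lemma abs_dotProduct_mulVec_le_coneNorm {C : Set (Fin p → ℝ)} (E : Matrix (Fin p) (Fin p) ℝ)
    {x y : Fin p → ℝ} (hxC : x ∈ C) (hyC : y ∈ C) (hx : enorm' x = 1) (hy : enorm' y = 1) :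
    |x ⬝ᵥ E *ᵥ y| ≤ coneNorm C E :=
  le_csSup (bddAbove_coneNorm_set C E) ⟨x, hxC, y, hyC, hx, hy, rfl⟩

lemma exists_unit_smul_eq {C : Set (Fin p → ℝ)}
    (hC : ∀ ⦃t : ℝ⦄, 0 < t → ∀ ⦃w⦄, w ∈ C → t • w ∈ C) {x : Fin p → ℝ} (hxC : x ∈ C)
    (hx : x ≠ 0) : ∃ u ∈ C, enorm' u = 1 ∧ x = enorm' x • u := by
  have hpos : 0 < enorm' x := (enorm'_nonneg x).lt_of_ne' (enorm'_eq_zero.not.mpr hx)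
  refine ⟨(enorm' x)⁻¹ • x, hC (inv_pos.mpr hpos) hxC, ?_, ?_⟩
  · rw [enorm'_smul, abs_of_pos (inv_pos.mpr hpos), inv_mul_cancel₀ hpos.ne']
  · rw [smul_smul, mul_inv_cancel₀ hpos.ne', one_smul]

lemma abs_dotProduct_mulVec_le_enorm'_mul_coneNorm {C : Set (Fin p → ℝ)}
    (hC : ∀ ⦃t : ℝ⦄, 0 < t → ∀ ⦃w⦄, w ∈ C → t • w ∈ C) (E : Matrix (Fin p) (Fin p) ℝ)
    {x y : Fin p → ℝ} (hxC : x ∈ C) (hyC : y ∈ C) :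
    |x ⬝ᵥ E *ᵥ y| ≤ enorm' x * enorm' y * coneNorm C E := by
  have hxy : 0 ≤ enorm' x * enorm' y := mul_nonneg (enorm'_nonneg x) (enorm'_nonneg y)
  rcases eq_or_ne x 0 with rfl | hx
  · simpa using mul_nonneg hxy (coneNorm_nonneg C E)
  rcases eq_or_ne y 0 with rfl | hy
  · simpa using mul_nonneg hxy (coneNorm_nonneg C E)
  obtain ⟨x', hx'C, hx', hxx'⟩ := exists_unit_smul_eq hC hxC hx
  obtain ⟨y', hy'C, hy', hyy'⟩ := exists_unit_smul_eq hC hyC hy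
  have hscale : x ⬝ᵥ E *ᵥ y = enorm' x * enorm' y * (x' ⬝ᵥ E *ᵥ y') := by
    conv_lhs => rw [hxx', hyy', mulVec_smul, smul_dotProduct, dotProduct_smul]
    simp only [smul_eq_mul]
    ring
  rw [hscale, abs_mul, abs_of_nonneg hxy]
  exact mul_le_mul_of_nonneg_left (abs_dotProduct_mulVec_le_coneNorm E hx'C hy'C hx' hy') hxy

lemma smul_mem_tangentCone {K : Set (Fin p → ℝ)} {xbar : Fin p → ℝ} ⦃t : ℝ⦄ (ht : 0 < t)
    ⦃w : Fin p → ℝ⦄ (hw : w ∈ tangentCone K xbar) : t • w ∈ tangentCone K xbar := by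
  obtain ⟨s, hs, v, hvK, rfl⟩ := hw
  exact ⟨t * s, by positivity, v, hvK, by rw [smul_smul]⟩

lemma sub_mem_tangentCone {K : Set (Fin p → ℝ)} {xbar v : Fin p → ℝ} (hvK : v ∈ K) :
    v - xbar ∈ tangentCone K xbar :=
  ⟨1, zero_le_one, v, hvK, (one_smul ℝ _).symm⟩

lemma mem_tangentCone_of_mem (K : ConvexCone ℝ (Fin p → ℝ)) {xbar v : Fin p → ℝ}
    (hxK : xbar ∈ K) (hvK : v ∈ K) : v ∈ tangentCone (K : Set (Fin p → ℝ)) xbar := by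
  simpa using sub_mem_tangentCone (xbar := xbar) (K.add_mem hvK hxK)

end

/-- For unit vectors `v, x̄` in a convex cone `K`,
`|vᵀ E v - x̄ᵀ E x̄| ≤ 4 ‖v - x̄‖ ‖E‖_{T_K(x̄)}`. -/
theorem abs_quadForm_sub_le_tangent {p : ℕ} (K : ConvexCone ℝ (Fin p → ℝ))
    (E : Matrix (Fin p) (Fin p) ℝ) (xbar v : Fin p → ℝ)
    (hxK : xbar ∈ K) (hx : enorm' xbar = 1) (hvK : v ∈ K) (hv : enorm' v = 1) :
    |v ⬝ᵥ E.mulVec v - xbar ⬝ᵥ E.mulVec xbar| ≤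
      4 * enorm' (v - xbar) * coneNorm (tangentCone (K : Set (Fin p → ℝ)) xbar) E := by
  set T := tangentCone (K : Set (Fin p → ℝ)) xbar
  have hT : ∀ ⦃x y⦄, x ∈ T → y ∈ T → |x ⬝ᵥ E *ᵥ y| ≤ enorm' x * enorm' y * coneNorm T E :=
    fun _ _ => abs_dotProduct_mulVec_le_enorm'_mul_coneNorm smul_mem_tangentCone E
  have hwT : v - xbar ∈ T := sub_mem_tangentCone hvK
  have hvT : v ∈ T := mem_tangentCone_of_mem K hxK hvK
  have hxT : xbar ∈ T := mem_tangentCone_of_mem K hxK hxK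
  have hsplit : v ⬝ᵥ E *ᵥ v - xbar ⬝ᵥ E *ᵥ xbar
      = (v - xbar) ⬝ᵥ E *ᵥ v + xbar ⬝ᵥ E *ᵥ (v - xbar) := by
    rw [sub_dotProduct, mulVec_sub, dotProduct_sub]
    ring
  have hN := coneNorm_nonneg T E
  have hw := enorm'_nonneg (v - xbar)
  calc |v ⬝ᵥ E *ᵥ v - xbar ⬝ᵥ E *ᵥ xbar|
      ≤ |(v - xbar) ⬝ᵥ E *ᵥ v| + |xbar ⬝ᵥ E *ᵥ (v - xbar)| := hsplit ▸ abs_add_le _ _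
    _ ≤ enorm' (v - xbar) * enorm' v * coneNorm T E
          + enorm' xbar * enorm' (v - xbar) * coneNorm T E := add_le_add (hT hwT hvT) (hT hxT hwT)
    _ ≤ 4 * enorm' (v - xbar) * coneNorm T E := by
      rw [hv, hx]
      nlinarith [mul_nonneg hw hN]
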